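/- Let A and B be uniform algebras on compact Hausdorff spaces X and Y, and let c ≠ 0. Suppose S : A → B is surjective, satisfies Ran_π(Sf · (Sg + c·1)) = Ran_π(f · (g + c·1)) for all f, g ∈ A, and fixes all constants. Then Ran_π(Sf) = Ran_π(f) for every f ∈ A; in particular S is norm-preserving: ‖Sf‖_∞ = ‖f‖_∞. -/

import Mathlib

/-- The peripheral range of a continuous function on a compact space. -/
def Ranπ {X : Type*} [TopologicalSpace X] [CompactSpace X] (f : C(X, ℂ)) : Set ℂ :=
  {z | z ∈ Set.range f ∧ ‖z‖ = ‖f‖}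

section PeripheralRange

variable {X Y : Type*} [TopologicalSpace X] [CompactSpace X] [TopologicalSpace Y] [CompactSpace Y]

lemma Ranπ_nonempty [Nonempty X] (f : C(X, ℂ)) : (Ranπ f).Nonempty := by
  obtain ⟨x, -, hx⟩ := isCompact_univ.exists_isMaxOn Set.univ_nonempty
    (map_continuous f).norm.continuousOn
  exact ⟨f x, ⟨x, rfl⟩, le_antisymm (f.norm_coe_le_norm x)
    ((f.norm_le (norm_nonneg _)).mpr fun y => hx (Set.mem_univ y))⟩

lemma norm_eq_zero_of_Ranπ_eq_empty {f : C(X, ℂ)} (hf : Ranπ f = ∅) : ‖f‖ = 0 := by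
  have : IsEmpty X := not_nonempty_iff.mp fun _ => (Ranπ_nonempty f).ne_empty hf
  rw [Subsingleton.elim f 0, norm_zero]

lemma norm_eq_of_Ranπ_eq {f : C(X, ℂ)} {g : C(Y, ℂ)} (h : Ranπ f = Ranπ g) : ‖f‖ = ‖g‖ := by
  rcases (Ranπ f).eq_empty_or_nonempty with hf | ⟨z, hz⟩
  · rw [norm_eq_zero_of_Ranπ_eq_empty hf, norm_eq_zero_of_Ranπ_eq_empty (h ▸ hf)]
  · exact hz.2.symm.trans (h ▸ hz).2

end PeripheralRange

theorem stmt12_general {X Y : Type*} [TopologicalSpace X] [CompactSpace X]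
    [TopologicalSpace Y] [CompactSpace Y]
    (A : Subalgebra ℂ C(X, ℂ))
    (B : Subalgebra ℂ C(Y, ℂ))
    (c : ℂ) (S : A → B)
    (hSeq : ∀ f g : A,
      Ranπ ((S f * (S g + c • 1) : B) : C(Y, ℂ)) = Ranπ ((f * (g + c • 1) : A) : C(X, ℂ)))
    (hSconst : ∀ lam : ℂ, S (lam • 1) = lam • 1) :
    ∀ f : A, Ranπ ((S f : B) : C(Y, ℂ)) = Ranπ ((f : C(X, ℂ))) ∧
      ‖((S f : B) : C(Y, ℂ))‖ = ‖(f : C(X, ℂ))‖ := by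
  intro f
  -- Take g = (1 - c)·1, so that both g + c·1 and S g + c·1 are the unit.
  have hA : ((1 - c) • 1 + c • 1 : A) = 1 := by rw [← add_smul, sub_add_cancel, one_smul]
  have hB : (S ((1 - c) • 1) + c • 1 : B) = 1 := by
    rw [hSconst, ← add_smul, sub_add_cancel, one_smul]
  have hRan : Ranπ ((S f : B) : C(Y, ℂ)) = Ranπ ((f : C(X, ℂ))) := by
    simpa only [hA, hB, mul_one] using hSeq f ((1 - c) • 1)
  exact ⟨hRan, norm_eq_of_Ranπ_eq hRan⟩

theorem stmt12 {X Y : Type*} [TopologicalSpace X] [CompactSpace X] [T2Space X]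
    [TopologicalSpace Y] [CompactSpace Y] [T2Space Y]
    (A : Subalgebra ℂ C(X, ℂ)) (hA : IsClosed (A : Set C(X, ℂ)))
    (hAsep : ∀ x y : X, x ≠ y → ∃ f ∈ A, f x ≠ f y)
    (B : Subalgebra ℂ C(Y, ℂ)) (hB : IsClosed (B : Set C(Y, ℂ)))
    (hBsep : ∀ x y : Y, x ≠ y → ∃ f ∈ B, f x ≠ f y)
    (c : ℂ) (hc : c ≠ 0) (S : A → B)
    (hSeq : ∀ f g : A,
      Ranπ ((S f * (S g + c • 1) : B) : C(Y, ℂ)) = Ranπ ((f * (g + c • 1) : A) : C(X, ℂ)))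
    (hSsurj : Function.Surjective S)
    (hSconst : ∀ lam : ℂ, S (lam • 1) = lam • 1) :
    ∀ f : A, Ranπ ((S f : B) : C(Y, ℂ)) = Ranπ ((f : C(X, ℂ))) ∧
      ‖((S f : B) : C(Y, ℂ))‖ = ‖(f : C(X, ℂ))‖ :=
  stmt12_general A B c S hSeq hSconst
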